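/- arXiv:2002.07909 — 4 statements merged into one kernel-verified Lean document; each statement's English description precedes it below -/
import Mathlib

section
/- If x₁, x₂ are linearly independent solutions of L_a x = 0 and y₀ is a particular solution of L_a x = h, then every solution of L_a x(t) = h(t) on ℕ_{a+1} has the form x(t) = c₁x₁(t) + c₂x₂(t) + y₀(t) for some constants c₁, c₂ ∈ ℝ. -/
open Finset

/-- Generalized rising function `x^{↑μ} = Γ(x+μ)/Γ(x)` (equals 0 when `Γ x = 0`,
matching the convention `0^{↑ν} = 0`). -/
noncomputable def rise (x μ : ℝ) : ℝ := Real.Gamma (x + μ) / Real.Gamma x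

/-- Nabla (backward) difference. -/
def nabla (f : ℤ → ℝ) (t : ℤ) : ℝ := f t - f (t - 1)

/-- Caputo nabla fractional difference of order `ν ∈ (0,1)` based at `a`. -/
noncomputable def caputo (ν : ℝ) (a : ℤ) (x : ℤ → ℝ) (t : ℤ) : ℝ :=
  ∑ τ ∈ Finset.Icc (a + 1) t,
    rise ((t - τ + 1 : ℤ) : ℝ) (-ν) / Real.Gamma (1 - ν) * nabla x τ

/-- Nabla fractional sum of order `ν` based at `a`. -/
noncomputable def fsum (ν : ℝ) (a : ℤ) (f : ℤ → ℝ) (t : ℤ) : ℝ :=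
  ∑ τ ∈ Finset.Icc (a + 1) t,
    rise ((t - τ + 1 : ℤ) : ℝ) (ν - 1) / Real.Gamma ν * f τ

/-- The self-adjoint operator `L_a x(t) = ∇[p(t+1)∇_{a*}^ν x(t+1)] + q(t)x(t)`. -/
noncomputable def Lop (ν : ℝ) (a : ℤ) (p q : ℤ → ℝ) (x : ℤ → ℝ) (t : ℤ) : ℝ :=
  (p (t + 1) * caputo ν a x (t + 1) - p t * caputo ν a x t) + q t * x t

/-! The equation `L_a x = h` can be solved forward step by step: the coefficient of `x (t + 1)` in
`L_a x (t)` is `p (t + 1) ≠ 0`, since the top term of `∇_{a*}^ν x (t + 1)` is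
`1^{↑(-ν)} / Γ(1 - ν) · ∇x (t + 1) = ∇x (t + 1)`. Hence a solution is determined by its values at
`a` and `a + 1`. If the Casoratian of `x₁, x₂` vanished at `a`, their initial data would be
proportional and so, by this uniqueness, would `x₁` and `x₂`. So the initial data of `x - y₀` is a
combination `c₁, c₂` of those of `x₁, x₂`, and uniqueness again gives `x = c₁ x₁ + c₂ x₂ + y₀`. -/

section Linearity

variable (ν : ℝ) (a : ℤ) (p q : ℤ → ℝ) (u v : ℤ → ℝ) (t : ℤ)

lemma caputo_add : caputo ν a (fun s => u s + v s) t = caputo ν a u t + caputo ν a v t := by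
  simp only [caputo, nabla, ← sum_add_distrib]
  exact sum_congr rfl fun _ _ => by ring

lemma caputo_sub : caputo ν a (fun s => u s - v s) t = caputo ν a u t - caputo ν a v t := by
  simp only [caputo, nabla, ← sum_sub_distrib]
  exact sum_congr rfl fun _ _ => by ring

lemma caputo_const_mul (c : ℝ) : caputo ν a (fun s => c * u s) t = c * caputo ν a u t := by
  simp only [caputo, nabla, mul_sum]
  exact sum_congr rfl fun _ _ => by ring

lemma Lop_add : Lop ν a p q (fun s => u s + v s) t = Lop ν a p q u t + Lop ν a p q v t := by
  simp only [Lop, caputo_add]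
  ring

lemma Lop_sub : Lop ν a p q (fun s => u s - v s) t = Lop ν a p q u t - Lop ν a p q v t := by
  simp only [Lop, caputo_sub]
  ring

lemma Lop_const_mul (c : ℝ) : Lop ν a p q (fun s => c * u s) t = c * Lop ν a p q u t := by
  simp only [Lop, caputo_const_mul]
  ring

end Linearity

lemma rise_one (μ : ℝ) : rise 1 μ = Real.Gamma (1 + μ) := by
  simp [rise]

section Uniqueness

variable {ν : ℝ} {a : ℤ} {p q z : ℤ → ℝ}

lemma nabla_eq_zero_of_vanish {t τ : ℤ} (hz : ∀ s, a ≤ s → s ≤ t → z s = 0)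
    (hτ : τ ∈ Icc (a + 1) t) : nabla z τ = 0 := by
  rw [mem_Icc] at hτ
  simp [nabla, hz τ (by omega) hτ.2, hz (τ - 1) (by omega) (by omega)]

lemma caputo_eq_zero_of_vanish {t : ℤ} (hz : ∀ s, a ≤ s → s ≤ t → z s = 0) :
    caputo ν a z t = 0 :=
  sum_eq_zero fun _ hτ => by rw [nabla_eq_zero_of_vanish hz hτ, mul_zero]

lemma caputo_succ_eq_of_vanish (hΓ : Real.Gamma (1 - ν) ≠ 0) {t : ℤ} (ht : a ≤ t)
    (hz : ∀ s, a ≤ s → s ≤ t → z s = 0) : caputo ν a z (t + 1) = z (t + 1) := by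
  have hlow : ∀ τ ∈ Icc (a + 1) (t + 1), τ ≠ t + 1 → τ ∈ Icc (a + 1) t := by
    intro τ hτ hne
    rw [mem_Icc] at hτ ⊢
    omega
  rw [caputo, sum_eq_single_of_mem (t + 1) (by rw [mem_Icc]; omega)
    fun τ hτ hne => by rw [nabla_eq_zero_of_vanish hz (hlow τ hτ hne), mul_zero]]
  have hcoeff : ((t + 1 - (t + 1) + 1 : ℤ) : ℝ) = 1 := by norm_num
  rw [hcoeff, rise_one, ← sub_eq_add_neg, div_self hΓ, one_mul, nabla, add_sub_cancel_right,
    hz t ht le_rfl, sub_zero]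

lemma eq_zero_of_Lop_eq_zero (hΓ : Real.Gamma (1 - ν) ≠ 0) (hp : ∀ t, a + 1 ≤ t → p t ≠ 0)
    (hz : ∀ t, a + 1 ≤ t → Lop ν a p q z t = 0) (ha : z a = 0) (ha₁ : z (a + 1) = 0)
    {t : ℤ} (ht : a ≤ t) : z t = 0 := by
  suffices h : ∀ n, a + 1 ≤ n → ∀ s, a ≤ s → s ≤ n → z s = 0 from
    h (max t (a + 1)) (le_max_right _ _) t ht (le_max_left _ _)
  intro n hn
  induction n, hn using Int.leInduction with
  | base =>
    intro s hs hs'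
    obtain rfl | rfl : s = a ∨ s = a + 1 := by omega
    exacts [ha, ha₁]
  | succ n hn ih =>
    have hstep : p (n + 1) * z (n + 1) = 0 := by
      have hL := hz n hn
      rw [Lop, caputo_eq_zero_of_vanish ih, caputo_succ_eq_of_vanish hΓ (by omega) ih,
        ih n (by omega) le_rfl] at hL
      linarith
    have hsucc : z (n + 1) = 0 := (mul_eq_zero.mp hstep).resolve_left (hp (n + 1) (by omega))
    intro s hs hs'
    obtain hle | rfl : s ≤ n ∨ s = n + 1 := by omega
    exacts [ih s hs hle, hsucc]

lemma eq_of_Lop_eq (hΓ : Real.Gamma (1 - ν) ≠ 0) (hp : ∀ t, a + 1 ≤ t → p t ≠ 0)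
    {u v : ℤ → ℝ} (huv : ∀ t, a + 1 ≤ t → Lop ν a p q u t = Lop ν a p q v t)
    (ha : u a = v a) (ha₁ : u (a + 1) = v (a + 1)) {t : ℤ} (ht : a ≤ t) : u t = v t :=
  sub_eq_zero.mp <| eq_zero_of_Lop_eq_zero (z := fun s => u s - v s) hΓ hp
    (fun t ht => by rw [Lop_sub, huv t ht, sub_self]) (sub_eq_zero.mpr ha)
    (sub_eq_zero.mpr ha₁) ht

lemma eq_const_mul_of_init (hΓ : Real.Gamma (1 - ν) ≠ 0) (hp : ∀ t, a + 1 ≤ t → p t ≠ 0)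
    {u v : ℤ → ℝ} (hu : ∀ t, a + 1 ≤ t → Lop ν a p q u t = 0)
    (hv : ∀ t, a + 1 ≤ t → Lop ν a p q v t = 0) {c : ℝ} (ha : u a = c * v a)
    (ha₁ : u (a + 1) = c * v (a + 1)) {t : ℤ} (ht : a ≤ t) : u t = c * v t :=
  eq_of_Lop_eq (v := fun s => c * v s) hΓ hp
    (fun t ht => by rw [Lop_const_mul, hu t ht, hv t ht, mul_zero]) ha ha₁ ht

end Uniqueness

lemma exists_eq_mul_of_det_eq_zero {a₁ a₂ b₁ b₂ : ℝ} (h : a₁ * b₂ - a₂ * b₁ = 0) :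
    (∃ c, a₁ = c * b₁ ∧ a₂ = c * b₂) ∨ ∃ c, b₁ = c * a₁ ∧ b₂ = c * a₂ := by
  by_cases hb₁ : b₁ = 0
  · by_cases hb₂ : b₂ = 0
    · exact Or.inr ⟨0, by simp [hb₁, hb₂]⟩
    · refine Or.inl ⟨a₂ / b₂, ?_, by field_simp⟩
      field_simp
      linarith
  · refine Or.inl ⟨a₁ / b₁, by field_simp, ?_⟩
    field_simp
    linarith

lemma exists_eq_mul_add_mul_of_det_ne_zero {a₁ a₂ b₁ b₂ : ℝ} (h : a₁ * b₂ - a₂ * b₁ ≠ 0)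
    (r₁ r₂ : ℝ) : ∃ c₁ c₂ : ℝ, r₁ = c₁ * a₁ + c₂ * b₁ ∧ r₂ = c₁ * a₂ + c₂ * b₂ :=
  ⟨(r₁ * b₂ - r₂ * b₁) / (a₁ * b₂ - a₂ * b₁), (a₁ * r₂ - a₂ * r₁) / (a₁ * b₂ - a₂ * b₁),
    by rw [div_mul_eq_mul_div, div_mul_eq_mul_div, ← add_div, eq_div_iff h]; ring,
    by rw [div_mul_eq_mul_div, div_mul_eq_mul_div, ← add_div, eq_div_iff h]; ring⟩

def casoratian (x₁ x₂ : ℤ → ℝ) (t : ℤ) : ℝ := x₁ t * x₂ (t + 1) - x₁ (t + 1) * x₂ t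

lemma casoratian_ne_zero {ν : ℝ} {a : ℤ} {p q x₁ x₂ : ℤ → ℝ} (hΓ : Real.Gamma (1 - ν) ≠ 0)
    (hp : ∀ t, a + 1 ≤ t → p t ≠ 0) (h₁ : ∀ t, a + 1 ≤ t → Lop ν a p q x₁ t = 0)
    (h₂ : ∀ t, a + 1 ≤ t → Lop ν a p q x₂ t = 0)
    (hli : (∀ c : ℝ, ∃ t, a ≤ t ∧ x₁ t ≠ c * x₂ t) ∧ (∀ c : ℝ, ∃ t, a ≤ t ∧ x₂ t ≠ c * x₁ t)) :
    casoratian x₁ x₂ a ≠ 0 := by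
  intro hW
  rcases exists_eq_mul_of_det_eq_zero hW with ⟨c, ha, ha₁⟩ | ⟨c, ha, ha₁⟩
  · obtain ⟨t, ht, hne⟩ := hli.1 c
    exact hne (eq_const_mul_of_init hΓ hp h₁ h₂ ha ha₁ ht)
  · obtain ⟨t, ht, hne⟩ := hli.2 c
    exact hne (eq_const_mul_of_init hΓ hp h₂ h₁ ha ha₁ ht)

theorem general_solution_nonhomogeneous_general (ν : ℝ) (hν1 : ν < 1) (a : ℤ)
    (p q h : ℤ → ℝ) (hp : ∀ t, a + 1 ≤ t → 0 < p t) (x₁ x₂ y₀ : ℤ → ℝ)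
    (h1 : ∀ t, a + 1 ≤ t → Lop ν a p q x₁ t = 0)
    (h2 : ∀ t, a + 1 ≤ t → Lop ν a p q x₂ t = 0)
    (hli : (∀ c : ℝ, ∃ t, a ≤ t ∧ x₁ t ≠ c * x₂ t) ∧
           (∀ c : ℝ, ∃ t, a ≤ t ∧ x₂ t ≠ c * x₁ t))
    (hy₀ : ∀ t, a + 1 ≤ t → Lop ν a p q y₀ t = h t)
    (x : ℤ → ℝ) (hx : ∀ t, a + 1 ≤ t → Lop ν a p q x t = h t) :
    ∃ c₁ c₂ : ℝ, ∀ t, a ≤ t → x t = c₁ * x₁ t + c₂ * x₂ t + y₀ t := by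
  have hΓ : Real.Gamma (1 - ν) ≠ 0 := (Real.Gamma_pos_of_pos (by linarith)).ne'
  have hp' : ∀ t, a + 1 ≤ t → p t ≠ 0 := fun t ht => (hp t ht).ne'
  obtain ⟨c₁, c₂, ha, ha₁⟩ := exists_eq_mul_add_mul_of_det_ne_zero
    (casoratian_ne_zero hΓ hp' h1 h2 hli) (x a - y₀ a) (x (a + 1) - y₀ (a + 1))
  have hL : ∀ t, a + 1 ≤ t →
      Lop ν a p q x t = Lop ν a p q (fun s => c₁ * x₁ s + c₂ * x₂ s + y₀ s) t := by
    intro t ht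
    rw [Lop_add, Lop_add, Lop_const_mul, Lop_const_mul, h1 t ht, h2 t ht, hx t ht, hy₀ t ht]
    ring
  exact ⟨c₁, c₂, fun t ht => eq_of_Lop_eq hΓ hp' hL (by linarith) (by linarith) ht⟩

theorem general_solution_nonhomogeneous (ν : ℝ) (hν : 0 < ν) (hν1 : ν < 1) (a : ℤ)
    (p q h : ℤ → ℝ) (hp : ∀ t, a + 1 ≤ t → 0 < p t) (x₁ x₂ y₀ : ℤ → ℝ)
    (h1 : ∀ t, a + 1 ≤ t → Lop ν a p q x₁ t = 0)
    (h2 : ∀ t, a + 1 ≤ t → Lop ν a p q x₂ t = 0)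
    (hli : (∀ c : ℝ, ∃ t, a ≤ t ∧ x₁ t ≠ c * x₂ t) ∧
           (∀ c : ℝ, ∃ t, a ≤ t ∧ x₂ t ≠ c * x₁ t))
    (hy₀ : ∀ t, a + 1 ≤ t → Lop ν a p q y₀ t = h t)
    (x : ℤ → ℝ) (hx : ∀ t, a + 1 ≤ t → Lop ν a p q x t = h t) :
    ∃ c₁ c₂ : ℝ, ∀ t, a ≤ t → x t = c₁ * x₁ t + c₂ * x₂ t + y₀ t :=
  general_solution_nonhomogeneous_general ν hν1 a p q h hp x₁ x₂ y₀ h1 h2 hli hy₀ x hx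
end

section
/- The Cauchy function for the equation ∇[p(t+1)∇_{s*}^ν x(t+1)] = 0 is x(t,s) = ∇_s^{-ν}(1/p)(t) = Σ_{τ=s+1}^{t} (t-τ+1)^{↑(ν-1)}/Γ(ν) · (1/p(τ)); that is, for each fixed s, this function satisfies ∇[p(t+1)∇_{s*}^ν x(t+1,s)] = 0 for t ∈ ℕ_{s+1}, x(s,s)=0, and ∇x(s+1,s) = 1/p(s+1). -/
open Finset

/-!
Both `∇_s^{-ν}` and `∇_{s*}^ν` are discrete convolutions based at `s`: the first with the
coefficients of `(1 - z)^{-ν}`, the second (applied to `∇x`) with those of `(1 - z)^{-(1-ν)}`.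
Such convolutions compose by multiplying kernels and commute with `∇` when the kernel vanishes
at `-1` and the function at `s`. Hence `∇_{s*}^ν ∇_s^{-ν} f` is `∇` of the convolution of `f` with
the coefficients of `(1 - z)^{-1}`, i.e. `∇` of the partial sums of `f`, which is `f` itself
(Chu–Vandermonde). So `p(t) ∇_{s*}^ν x(t) = 1` for `t ≥ s + 1`, and its `∇` vanishes.
-/

open scoped Nat

theorem Ring.multichoose_add {R : Type*} [CommRing R] [BinomialRing R] (r s : R) (n : ℕ) :
    Ring.multichoose (r + s) n =
      ∑ ij ∈ antidiagonal n, Ring.multichoose r ij.1 * Ring.multichoose s ij.2 := by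
  have h := Ring.add_choose_eq n (Commute.all (-r) (-s))
  simp_rw [← neg_add, Ring.choose_neg', smul_mul_smul_comm, ← Int.negOnePow_add,
    ← Nat.cast_add] at h
  rw [Finset.sum_congr rfl fun ij hij => by rw [mem_antidiagonal.mp hij], ← Finset.smul_sum] at h
  exact smul_left_cancel _ h

theorem Real.Gamma_add_natCast {x : ℝ} (hx : ∀ k : ℕ, x + k ≠ 0) (n : ℕ) :
    Real.Gamma (x + n) = (ascPochhammer ℝ n).eval x * Real.Gamma x := by
  induction n with
  | zero => simp
  | succ n ih =>
    rw [Nat.cast_succ, ← add_assoc, Real.Gamma_add_one (hx n), ih, ascPochhammer_succ_eval]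
    ring

theorem Real.multichoose_eq_Gamma {x : ℝ} (hx : 0 < x) (n : ℕ) :
    Ring.multichoose x n = Real.Gamma (x + n) / (Real.Gamma x * n !) := by
  have h := Ring.factorial_nsmul_multichoose_eq_ascPochhammer x n
  rw [Polynomial.ascPochhammer_smeval_eq_eval, nsmul_eq_mul] at h
  rw [Real.Gamma_add_natCast (fun k => by positivity), ← h]
  field_simp [(Real.Gamma_pos_of_pos hx).ne']

noncomputable def nablaConv (k : ℤ → ℝ) (a : ℤ) (f : ℤ → ℝ) (t : ℤ) : ℝ :=
  ∑ τ ∈ Icc (a + 1) t, k (t - τ) * f τ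

section nablaConv

variable {k l : ℤ → ℝ} {a : ℤ} {f g : ℤ → ℝ}

theorem nablaConv_self : nablaConv k a f a = 0 := by
  simp [nablaConv]

theorem nablaConv_succ_self : nablaConv k a f (a + 1) = k 0 * f (a + 1) := by
  simp [nablaConv]

theorem nablaConv_sub_one (hk : k (-1) = 0) (t : ℤ) :
    nablaConv k a f (t - 1) = ∑ τ ∈ Icc (a + 1) t, k (t - 1 - τ) * f τ := by
  refine sum_subset (Icc_subset_Icc_right (by omega)) fun τ hτ hτ' => ?_
  rw [show τ = t by simp only [mem_Icc] at hτ hτ'; omega, sub_sub_cancel_left, hk, zero_mul]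

theorem nabla_nablaConv (hk : k (-1) = 0) : nabla (nablaConv k a f) = nablaConv (nabla k) a f := by
  funext t
  rw [nabla, nablaConv_sub_one hk, nablaConv, nablaConv, ← sum_sub_distrib]
  refine sum_congr rfl fun τ _ => ?_
  rw [nabla, sub_right_comm, sub_mul]

theorem nablaConv_nabla (hk : k (-1) = 0) (hg : g a = 0) :
    nablaConv k a (nabla g) = nablaConv (nabla k) a g := by
  funext t
  have shift : ∑ τ ∈ Icc (a + 1) t, k (t - τ) * g (τ - 1)
      = ∑ σ ∈ Icc a (t - 1), k (t - 1 - σ) * g σ := by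
    refine sum_nbij' (· - 1) (· + 1) ?_ ?_ ?_ ?_ ?_ <;> intro τ <;> simp only [mem_Icc] <;>
      first | omega | (intro; ring_nf)
  have drop_base : ∑ σ ∈ Icc a (t - 1), k (t - 1 - σ) * g σ = nablaConv k a g (t - 1) := by
    refine (sum_subset (Icc_subset_Icc_left (by omega)) fun σ hσ hσ' => ?_).symm
    rw [show σ = a by simp only [mem_Icc] at hσ hσ'; omega, hg, mul_zero]
  simp only [nablaConv, nabla, mul_sub, sum_sub_distrib]
  rw [shift, drop_base, nablaConv_sub_one hk, ← sum_sub_distrib]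
  refine sum_congr rfl fun τ _ => ?_
  rw [sub_right_comm, sub_mul]

/-- `nablaConv k (-1) l` is the Cauchy product of the kernels `k` and `l`. -/
theorem nablaConv_nablaConv :
    nablaConv k a (nablaConv l a f) = nablaConv (nablaConv k (-1) l) a f := by
  funext t
  simp only [nablaConv, mul_sum, sum_mul, neg_add_cancel]
  rw [sum_comm' (t' := Icc (a + 1) t) (s' := fun u => Icc u t) fun τ u => by
    simp only [mem_Icc]; omega]
  refine sum_congr rfl fun u _ => ?_
  refine sum_nbij' (· - u) (· + u) ?_ ?_ ?_ ?_ ?_ <;> intro τ <;> simp only [mem_Icc] <;>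
    first | omega | (intro; ring_nf)

end nablaConv

/-- The coefficients of `(1 - z)^{-μ}`, extended by zero to negative indices. -/
noncomputable def risingKernel (μ : ℝ) (n : ℤ) : ℝ :=
  if 0 ≤ n then Ring.multichoose μ n.toNat else 0

theorem risingKernel_of_neg (μ : ℝ) {n : ℤ} (hn : n < 0) : risingKernel μ n = 0 :=
  if_neg hn.not_ge

theorem risingKernel_natCast (μ : ℝ) (n : ℕ) : risingKernel μ n = Ring.multichoose μ n := by
  simp [risingKernel]

theorem risingKernel_zero (μ : ℝ) : risingKernel μ 0 = 1 := by
  simp [risingKernel]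

theorem rise_div_Gamma_eq_risingKernel {μ : ℝ} (hμ : 0 < μ) {n : ℤ} (hn : 0 ≤ n) :
    rise ((n + 1 : ℤ) : ℝ) (μ - 1) / Real.Gamma μ = risingKernel μ n := by
  lift n to ℕ using hn
  rw [risingKernel_natCast, Real.multichoose_eq_Gamma hμ, rise, Int.cast_add, Int.cast_natCast,
    Int.cast_one, Real.Gamma_nat_eq_factorial, show (n : ℝ) + 1 + (μ - 1) = μ + n by ring,
    div_div, mul_comm]

theorem risingKernel_one (n : ℤ) : risingKernel 1 n = if 0 ≤ n then 1 else 0 := by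
  simp [risingKernel, Ring.multichoose_one]

theorem nabla_risingKernel_one : nabla (risingKernel 1) = fun n => if n = 0 then 1 else 0 := by
  funext n
  simp only [nabla, risingKernel_one]
  split_ifs <;> norm_num <;> omega

theorem nablaConv_risingKernel (μ ρ : ℝ) :
    nablaConv (risingKernel μ) (-1) (risingKernel ρ) = risingKernel (μ + ρ) := by
  funext n
  rcases lt_or_ge n 0 with hn | hn
  · rw [risingKernel_of_neg _ hn, nablaConv, Icc_eq_empty (by omega), sum_empty]
  lift n to ℕ using hn
  rw [risingKernel_natCast, add_comm, Ring.multichoose_add,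
    Nat.sum_antidiagonal_eq_sum_range_succ (fun i j => Ring.multichoose ρ i * Ring.multichoose μ j),
    nablaConv, neg_add_cancel]
  refine sum_nbij' Int.toNat (↑) ?_ ?_ ?_ ?_ ?_ <;> intro τ <;> simp only [mem_Icc, mem_range]
  any_goals omega
  · rintro ⟨hτ, hτn⟩
    lift τ to ℕ using hτ
    rw [show (n : ℤ) - τ = ((n - τ : ℕ) : ℤ) by omega, risingKernel_natCast, risingKernel_natCast,
      Int.toNat_natCast, mul_comm]

theorem fsum_eq_nablaConv {ν : ℝ} (hν : 0 < ν) (a : ℤ) (f : ℤ → ℝ) :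
    fsum ν a f = nablaConv (risingKernel ν) a f := by
  funext t
  refine sum_congr rfl fun τ hτ => ?_
  rw [rise_div_Gamma_eq_risingKernel hν (by simp only [mem_Icc] at hτ; omega)]

theorem caputo_eq_nablaConv {ν : ℝ} (hν : ν < 1) (a : ℤ) (x : ℤ → ℝ) :
    caputo ν a x = nablaConv (risingKernel (1 - ν)) a (nabla x) := by
  funext t
  refine sum_congr rfl fun τ hτ => ?_
  rw [show -ν = 1 - ν - 1 by ring,
    rise_div_Gamma_eq_risingKernel (by linarith) (by simp only [mem_Icc] at hτ; omega)]

theorem nablaConv_delta {a t : ℤ} (ht : a + 1 ≤ t) (f : ℤ → ℝ) :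
    nablaConv (fun n => if n = 0 then 1 else 0) a f t = f t := by
  simp [nablaConv, sub_eq_zero, ht]

theorem caputo_fsum {ν : ℝ} (hν : 0 < ν) (hν1 : ν < 1) {a t : ℤ} (ht : a + 1 ≤ t)
    (f : ℤ → ℝ) : caputo ν a (fsum ν a f) t = f t := by
  have hk : ∀ μ, risingKernel μ (-1) = 0 := fun μ => risingKernel_of_neg μ (by norm_num)
  calc caputo ν a (fsum ν a f) t
      = nablaConv (risingKernel (1 - ν)) a (nabla (nablaConv (risingKernel ν) a f)) t := by
        rw [caputo_eq_nablaConv hν1, fsum_eq_nablaConv hν]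
    _ = nabla (nablaConv (risingKernel (1 - ν)) a (nablaConv (risingKernel ν) a f)) t := by
        rw [nablaConv_nabla (hk _) nablaConv_self, nabla_nablaConv (hk _)]
    _ = nabla (nablaConv (risingKernel 1) a f) t := by
        rw [nablaConv_nablaConv, nablaConv_risingKernel, sub_add_cancel]
    _ = f t := by
        rw [nabla_nablaConv (hk _), nabla_risingKernel_one, nablaConv_delta ht]

theorem cauchy_function_selfadjoint (ν : ℝ) (hν : 0 < ν) (hν1 : ν < 1) (s : ℤ)
    (p : ℤ → ℝ) (hp : ∀ t, s + 1 ≤ t → 0 < p t) :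
    (∀ t, s + 1 ≤ t →
      p (t + 1) * caputo ν s (fsum ν s (fun τ => 1 / p τ)) (t + 1)
        - p t * caputo ν s (fsum ν s (fun τ => 1 / p τ)) t = 0) ∧
    fsum ν s (fun τ => 1 / p τ) s = 0 ∧
    nabla (fsum ν s (fun τ => 1 / p τ)) (s + 1) = 1 / p (s + 1) := by
  refine ⟨fun t ht => ?_, ?_, ?_⟩
  · rw [caputo_fsum hν hν1 ht, caputo_fsum hν hν1 (by omega),
      mul_one_div_cancel (hp (t + 1) (by omega)).ne', mul_one_div_cancel (hp t ht).ne', sub_self]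
  · rw [fsum_eq_nablaConv hν, nablaConv_self]
  · rw [fsum_eq_nablaConv hν, nabla, add_sub_cancel_right, nablaConv_succ_self, nablaConv_self,
      risingKernel_zero, one_mul, sub_zero]
end

section
/- The Cauchy function for ∇∇_{s*}^ν x(t+1) = 0 is x(t,s) = (t-s)^{↑ν}/Γ(ν+1); i.e., for each fixed s, the function t ↦ (t-s)^{↑ν}/Γ(ν+1) satisfies ∇[∇_{s*}^ν x(t+1,s)] = 0 for t ∈ ℕ_{s+1}, x(s,s) = 0, and ∇x(s+1,s) = 1. -/
open Finset

/-
Since `(n + 1)^{↑(a - 1)} / Γ(a) = Γ(a + n) / (Γ(a) n!) = (a multichoose n)`, writing `t = s + 1 + n`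
the Cauchy function is the multichoose coefficient `((ν + 1) multichoose n)`,
so by Pascal's rule its nabla difference at `s + 1 + n` is `(ν multichoose n)`, while the Caputo kernel
at lag `i` is `((1 - ν) multichoose i)`. The Caputo difference at `s + 1 + n` is thus the Cauchy product
`∑_{i+j=n} ((1 - ν) multichoose i) (ν multichoose j)`, which by Chu–Vandermonde is `(1 multichoose n) = 1`.
Hence `∇_{s*}^ν x ≡ 1` on `ℕ_{s+1}` and its nabla difference vanishes.
-/

theorem Finset.sum_Icc_add_nat_eq_sum_antidiagonal {M : Type*} [AddCommMonoid M]
    (g : ℤ → M) (a : ℤ) (n : ℕ) :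
    ∑ τ ∈ Icc a (a + n), g τ = ∑ ij ∈ antidiagonal n, g (a + ij.2) := by
  refine sum_nbij' (fun τ => ((a + n - τ).toNat, (τ - a).toNat)) (fun ij => a + ij.2)
    ?_ ?_ ?_ ?_ ?_ <;>
    simp only [mem_Icc, HasAntidiagonal.mem_antidiagonal, Prod.forall, Prod.ext_iff] <;>
    intros <;> first | omega | (congr 1; omega)

namespace Ring

variable {R : Type*} [CommRing R] [BinomialRing R]

/-- Obtained from `Ring.add_choose_eq` through `multichoose r n = (-1)ⁿ choose (-r) n`. -/
theorem multichoose_add_s10 (r s : R) (n : ℕ) :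
    multichoose (r + s) n = ∑ ij ∈ antidiagonal n, multichoose r ij.1 * multichoose s ij.2 := by
  have h := add_choose_eq n (Commute.all (-r) (-s))
  rw [← neg_add, choose_neg'] at h
  simp only [choose_neg', smul_mul_smul_comm, ← Int.negOnePow_add, ← Nat.cast_add] at h
  rw [sum_congr rfl fun ij hij => by rw [HasAntidiagonal.mem_antidiagonal.mp hij],
    ← smul_sum] at h
  exact MulAction.injective _ h

theorem multichoose_eq_ascPochhammer_div (a : ℝ) (n : ℕ) :
    multichoose a n = (ascPochhammer ℝ n).eval a / n.factorial := by
  rw [eq_div_iff (by positivity), mul_comm, ← nsmul_eq_mul,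
    factorial_nsmul_multichoose_eq_ascPochhammer, Polynomial.ascPochhammer_smeval_eq_eval]

end Ring

theorem Real.Gamma_add_nat {a : ℝ} (ha : ∀ m : ℕ, a ≠ -m) (n : ℕ) :
    Gamma (a + n) = (ascPochhammer ℝ n).eval a * Gamma a := by
  induction n with
  | zero => simp
  | succ n ih =>
    have hn : a + n ≠ 0 := fun h => ha n (by linarith)
    rw [Nat.cast_succ, ← add_assoc, Gamma_add_one hn, ih, ascPochhammer_succ_eval]
    ring

theorem ne_neg_natCast_of_pos {a : ℝ} (ha : 0 < a) (m : ℕ) : a ≠ -m := by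
  have : (0 : ℝ) ≤ m := m.cast_nonneg
  linarith

theorem rise_natCast_add_one_div_Gamma {a : ℝ} (ha : ∀ m : ℕ, a ≠ -m) (n : ℕ) :
    rise (n + 1) (a - 1) / Real.Gamma a = Ring.multichoose a n := by
  rw [rise, show (n : ℝ) + 1 + (a - 1) = a + n by ring, Real.Gamma_nat_eq_factorial,
    Real.Gamma_add_nat ha, Ring.multichoose_eq_ascPochhammer_div]
  field_simp [Real.Gamma_ne_zero ha]

noncomputable def cauchyFunction (ν : ℝ) (s t : ℤ) : ℝ :=
  rise ((t - s : ℤ) : ℝ) ν / Real.Gamma (ν + 1)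

theorem cauchyFunction_self (ν : ℝ) (s : ℤ) : cauchyFunction ν s s = 0 := by
  simp [cauchyFunction, rise]

section CauchyFunction

variable {ν : ℝ} (s : ℤ)

theorem cauchyFunction_add_one_add_nat (hν : -1 < ν) (n : ℕ) :
    cauchyFunction ν s (s + 1 + n) = Ring.multichoose (ν + 1) n := by
  rw [cauchyFunction, ← rise_natCast_add_one_div_Gamma (ne_neg_natCast_of_pos (by linarith)),
    add_sub_cancel_right]
  push_cast
  ring_nf

theorem nabla_cauchyFunction (hν : -1 < ν) (n : ℕ) :
    nabla (cauchyFunction ν s) (s + 1 + n) = Ring.multichoose ν n := by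
  cases n with
  | zero => simpa [nabla, cauchyFunction_self] using cauchyFunction_add_one_add_nat s hν 0
  | succ n =>
    rw [nabla, show s + 1 + ↑(n + 1) - 1 = s + 1 + n by push_cast; ring,
      cauchyFunction_add_one_add_nat s hν, cauchyFunction_add_one_add_nat s hν,
      Ring.multichoose_succ_succ, add_sub_cancel_right]

theorem caputo_cauchyFunction_add_one_add_nat (hν : -1 < ν) (hν1 : ν < 1) (n : ℕ) :
    caputo ν s (cauchyFunction ν s) (s + 1 + n) = 1 := by
  have kernel (i : ℕ) : rise (i + 1) (-ν) / Real.Gamma (1 - ν) = Ring.multichoose (1 - ν) i := by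
    simpa using rise_natCast_add_one_div_Gamma (ne_neg_natCast_of_pos (sub_pos.2 hν1)) i
  rw [caputo, sum_Icc_add_nat_eq_sum_antidiagonal]
  conv_rhs => rw [← Ring.multichoose_one (R := ℝ) n, ← sub_add_cancel 1 ν, Ring.multichoose_add_s10]
  refine sum_congr rfl fun ij hij => ?_
  rw [← HasAntidiagonal.mem_antidiagonal.mp hij, nabla_cauchyFunction s hν, ← kernel]
  push_cast
  ring_nf

theorem caputo_cauchyFunction (hν : -1 < ν) (hν1 : ν < 1) {t : ℤ} (ht : s + 1 ≤ t) :
    caputo ν s (cauchyFunction ν s) t = 1 := by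
  obtain ⟨n, rfl⟩ : ∃ n : ℕ, t = s + 1 + n := ⟨(t - (s + 1)).toNat, by omega⟩
  exact caputo_cauchyFunction_add_one_add_nat s hν hν1 n

end CauchyFunction

theorem cauchy_function_simple (ν : ℝ) (hν : 0 < ν) (hν1 : ν < 1) (s : ℤ) :
    (∀ t, s + 1 ≤ t →
      caputo ν s (fun τ => rise ((τ - s : ℤ) : ℝ) ν / Real.Gamma (ν + 1)) (t + 1)
        - caputo ν s (fun τ => rise ((τ - s : ℤ) : ℝ) ν / Real.Gamma (ν + 1)) t = 0) ∧
    rise ((s - s : ℤ) : ℝ) ν / Real.Gamma (ν + 1) = 0 ∧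
    nabla (fun τ => rise ((τ - s : ℤ) : ℝ) ν / Real.Gamma (ν + 1)) (s + 1) = 1 := by
  rw [show (fun τ => rise ((τ - s : ℤ) : ℝ) ν / Real.Gamma (ν + 1)) = cauchyFunction ν s from rfl]
  have hν' : -1 < ν := by linarith
  refine ⟨fun t ht => ?_, cauchyFunction_self ν s, ?_⟩
  · rw [caputo_cauchyFunction s hν' hν1 ht, caputo_cauchyFunction s hν' hν1 (by omega), sub_self]
  · simpa using nabla_cauchyFunction s hν' 0
end

section
/- The Green's function G(t,s) for the BVP ∇∇_{a*}^ν x(t+1)=0, x(a)=x(b)=0 satisfies G(t,s) ≤ 0 for all t, s ∈ ℕ_a^b. -/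
open Finset

/-- Green function for the conjugate BVP `∇∇_{a*}^ν x(t+1) = 0`, `x(a)=x(b)=0`. -/
noncomputable def Grn (ν : ℝ) (a b t s : ℤ) : ℝ :=
  if t ≤ s then
    -(rise ((b - s : ℤ) : ℝ) ν * rise ((t - a : ℤ) : ℝ) ν) /
      (Real.Gamma (1 + ν) * rise ((b - a : ℤ) : ℝ) ν)
  else
    -(rise ((b - s : ℤ) : ℝ) ν * rise ((t - a : ℤ) : ℝ) ν) /
      (Real.Gamma (1 + ν) * rise ((b - a : ℤ) : ℝ) ν)
      + rise ((t - s : ℤ) : ℝ) ν / Real.Gamma (1 + ν)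

/-!
For `s < t` put `x = t - s`, `y = b - s`, `k = s - a`, so that `x ≤ y`, `t - a = x + k`
and `b - a = y + k`; then `G(t,s) ≤ 0` amounts to `(y + k)^{↑ν} x^{↑ν} ≤ (x + k)^{↑ν} y^{↑ν}`.
By `Γ(z + 1) = z Γ(z)`, `(x + k)^{↑ν} / x^{↑ν} = ∏_{j < k} (x + j + ν) / (x + j)`, and every
factor `1 + ν / (x + j)` decreases in `x`. For `t ≤ s` every factor of `G` has a fixed sign.
-/

lemma rise_pos {x ν : ℝ} (hx : 0 < x) (hxν : 0 < x + ν) : 0 < rise x ν :=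
  div_pos (Real.Gamma_pos_of_pos hxν) (Real.Gamma_pos_of_pos hx)

lemma rise_natCast_nonneg {ν : ℝ} (hν : 0 ≤ ν) (n : ℕ) : 0 ≤ rise n ν := by
  rcases Nat.eq_zero_or_pos n with rfl | hn
  · simp [rise]
  · have hx : (0 : ℝ) < n := by exact_mod_cast hn
    exact (rise_pos hx (by linarith)).le

lemma rise_add_one {x ν : ℝ} (hx : x ≠ 0) (hxν : x + ν ≠ 0) :
    rise (x + 1) ν = rise x ν * ((x + ν) / x) := by
  rw [rise, rise, add_right_comm, Real.Gamma_add_one hx, Real.Gamma_add_one hxν,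
    mul_div_mul_comm, mul_comm]

lemma rise_add_nat {x ν : ℝ} (hx : 0 < x) (hxν : 0 < x + ν) (k : ℕ) :
    rise (x + k) ν = rise x ν * ∏ j ∈ range k, (x + j + ν) / (x + j) := by
  induction k with
  | zero => simp
  | succ k ih =>
    have hxk : 0 < x + k := by positivity
    rw [Nat.cast_succ, ← add_assoc, rise_add_one hxk.ne' (by linarith), ih, prod_range_succ,
      mul_assoc]

lemma rise_add_nat_mul_le {x y ν : ℝ} (hx : 0 < x) (hν : 0 ≤ ν) (hxy : x ≤ y) (k : ℕ) :
    rise (y + k) ν * rise x ν ≤ rise (x + k) ν * rise y ν := by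
  have hy : 0 < y := hx.trans_le hxy
  have factor_le : ∀ j ∈ range k, (y + j + ν) / (y + j) ≤ (x + j + ν) / (x + j) := by
    intro j _
    have hxj : 0 < x + j := by positivity
    rw [add_div (y + j), add_div (x + j), div_self hxj.ne', div_self (by positivity)]
    gcongr
  have prod_le :
      ∏ j ∈ range k, (y + j + ν) / (y + j) ≤ ∏ j ∈ range k, (x + j + ν) / (x + j) :=
    prod_le_prod (fun j _ => by positivity) factor_le
  have hrise : 0 ≤ rise y ν * rise x ν :=
    (mul_pos (rise_pos hy (by linarith)) (rise_pos hx (by linarith))).le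
  rw [rise_add_nat hx (by linarith), rise_add_nat hy (by linarith)]
  calc rise y ν * (∏ j ∈ range k, (y + j + ν) / (y + j)) * rise x ν
      = rise y ν * rise x ν * ∏ j ∈ range k, (y + j + ν) / (y + j) := by ring
    _ ≤ rise y ν * rise x ν * ∏ j ∈ range k, (x + j + ν) / (x + j) :=
        mul_le_mul_of_nonneg_left prod_le hrise
    _ = rise x ν * (∏ j ∈ range k, (x + j + ν) / (x + j)) * rise y ν := by ring

lemma rise_intCast_nonneg {ν : ℝ} (hν : 0 ≤ ν) {m : ℤ} (hm : 0 ≤ m) : 0 ≤ rise m ν := by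
  lift m to ℕ using hm
  exact_mod_cast rise_natCast_nonneg hν m

theorem greens_function_nonpositive_general (ν : ℝ) (hν : 0 < ν) (a b : ℤ) :
    ∀ t s : ℤ, a ≤ t → t ≤ b → a ≤ s → s ≤ b → Grn ν a b t s ≤ 0 := by
  intro t s hat htb has hsb
  have hC : 0 < Real.Gamma (1 + ν) := Real.Gamma_pos_of_pos (by linarith)
  have hA : 0 ≤ rise ((b - s : ℤ) : ℝ) ν := rise_intCast_nonneg hν.le (by omega)
  have hB : 0 ≤ rise ((t - a : ℤ) : ℝ) ν := rise_intCast_nonneg hν.le (by omega)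
  unfold Grn
  split_ifs with hts
  · have hD : 0 ≤ rise ((b - a : ℤ) : ℝ) ν := rise_intCast_nonneg hν.le (by omega)
    exact div_nonpos_of_nonpos_of_nonneg (neg_nonpos.2 (mul_nonneg hA hB)) (by positivity)
  · obtain ⟨k, hk⟩ : ∃ k : ℕ, s - a = k := ⟨(s - a).toNat, by omega⟩
    have hx : (0 : ℝ) < ((t - s : ℤ) : ℝ) := by exact_mod_cast (by omega : (0 : ℤ) < t - s)
    have hxy : ((t - s : ℤ) : ℝ) ≤ ((b - s : ℤ) : ℝ) := by
      exact_mod_cast (by omega : t - s ≤ b - s)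
    have hsum : ∀ u : ℤ, ((u - a : ℤ) : ℝ) = ((u - s : ℤ) : ℝ) + k := fun u => by
      rw [← Int.cast_natCast, ← Int.cast_add, ← hk]; ring_nf
    have hD : 0 < rise ((b - a : ℤ) : ℝ) ν := by
      rw [hsum]; exact rise_pos (by linarith) (by positivity)
    have key := rise_add_nat_mul_le hx hν.le hxy k
    rw [← hsum, ← hsum] at key
    rw [neg_div, neg_add_nonpos_iff, div_le_div_iff₀ hC (mul_pos hC hD)]
    nlinarith

theorem greens_function_nonpositive (ν : ℝ) (hν : 0 < ν) (hν1 : ν < 1) (a b : ℤ)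
    (hab : a < b) :
    ∀ t s : ℤ, a ≤ t → t ≤ b → a ≤ s → s ≤ b → Grn ν a b t s ≤ 0 :=
  greens_function_nonpositive_general ν hν a b
end
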